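/- There is a well-defined injective ℝ-algebra homomorphism from ℝ[u,v]/(u² + v² + 1) into the field ℂ((t⁻¹)) of formal Laurent series over ℂ, determined by u ↦ (t − t⁻¹)/2 and v ↦ (t + t⁻¹)/(2i). -/

import Mathlib

open HahnSeries MvPolynomial

noncomputable section

/-- `t^i ∈ ℂ((t⁻¹))`: we model `ℂ((t⁻¹))` as `LaurentSeries ℂ` in the variable
`T = t⁻¹`, so `t^i = T^{-i}`. -/
def tPow (i : ℤ) : LaurentSeries ℂ := HahnSeries.single (-i) (1 : ℂ)

/-- The coordinate ring `ℝ[u,v]/(u² + v² + 1)` of the affine part of the twistor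
projective line. -/
abbrev TwistorRing : Type :=
  MvPolynomial (Fin 2) ℝ ⧸ Ideal.span {(X 0 : MvPolynomial (Fin 2) ℝ) ^ 2 + X 1 ^ 2 + 1}

/-!
Write `s = t⁻¹`, `u = (t - s)/2` and `v = (t + s)/(2i)`. Then `iv + u = t` and `iv - u = s`, so
`u² + v² + 1 = 1 - ts = 0` and the map is well defined.

For injectivity, `u² + v² + 1` is monic in `u`, so every class of `ℝ[u,v]/(u² + v² + 1)` is
represented by `p(v) + u q(v)` with `p, q ∈ ℝ[v]`. Both `u` and `v` have a simple pole in `t`,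
with leading coefficients `1/2` and `1/(2i)`, so a nonzero `p(v)` has leading term
`lc(p) (2i)^{-n} tⁿ` with `n = deg p`. If `p(v) + u q(v) = 0` with `q ≠ 0`, comparing leading
terms gives `deg p = deg q + 1` and `lc(p) = -i lc(q)`, impossible for real nonzero `lc(p)`.
-/

open scoped Polynomial

theorem Polynomial.eval₂_eq_eval₂_eraseLead_add {R S : Type*} [Semiring R] [Semiring S]
    (f : R →+* S) (x : S) (p : R[X]) :
    p.eval₂ f x = p.eraseLead.eval₂ f x + f p.leadingCoeff * x ^ p.natDegree := by
  conv_lhs => rw [← p.eraseLead_add_monomial_natDegree_leadingCoeff]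
  rw [eval₂_add, eval₂_monomial]

theorem Polynomial.ker_eq_span_singleton_of_monic {R S : Type*} [CommRing R] [Nontrivial R]
    [Semiring S] (f : R[X] →+* S) {F : R[X]} (hF : F.Monic) (hfF : f F = 0)
    (hf : ∀ r : R[X], r.degree < F.degree → f r = 0 → r = 0) :
    RingHom.ker f = Ideal.span {F} := by
  refine le_antisymm (fun g hg => ?_) ((Ideal.span_singleton_le_iff_mem _).mpr hfF)
  rw [Ideal.mem_span_singleton, ← modByMonic_eq_zero_iff_dvd hF]
  refine hf _ (degree_modByMonic_lt g hF) ?_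
  have hsplit := congrArg f (modByMonic_add_div g F)
  rw [map_add, map_mul, hfF, zero_mul, add_zero] at hsplit
  exact hsplit.trans hg

namespace MvPolynomial

variable (R : Type*) [CommSemiring R]

def bivariateEquiv : MvPolynomial (Fin 2) R ≃ₐ[R] R[X][X] :=
  (finSuccEquiv R 1).trans <| Polynomial.mapAlgEquiv <|
    (finSuccEquiv R 0).trans (Polynomial.mapAlgEquiv (isEmptyAlgEquiv R (Fin 0)))

@[simp] theorem bivariateEquiv_X_zero : bivariateEquiv R (X 0) = Polynomial.X := by
  simp [bivariateEquiv, finSuccEquiv_X_zero]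

@[simp] theorem bivariateEquiv_X_one : bivariateEquiv R (X 1) = Polynomial.C Polynomial.X := by
  rw [bivariateEquiv, AlgEquiv.trans_apply, ← Fin.succ_zero_eq_one, finSuccEquiv_X_succ]
  simp [finSuccEquiv_X_zero]

end MvPolynomial

namespace HahnSeries

variable {Γ R : Type*} [AddCommMonoid Γ] [LinearOrder Γ] [IsOrderedCancelAddMonoid Γ]
  [CommSemiring R]

theorem orderTop_C {r : R} (hr : r ≠ 0) : (C r : R⟦Γ⟧).orderTop = 0 := by
  rw [C_apply, orderTop_single hr, WithTop.coe_zero]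

theorem strictAnti_nsmul_orderTop {x : R⟦Γ⟧} (hx : x.orderTop < 0) :
    StrictAnti fun n : ℕ => n • x.orderTop := by
  intro m n hmn
  obtain ⟨g, hg⟩ := WithTop.ne_top_iff_exists.mp hx.ne_top
  rw [← hg, ← WithTop.coe_zero, WithTop.coe_lt_coe] at hx
  simp only [← hg, ← WithTop.coe_nsmul, WithTop.coe_lt_coe]
  exact nsmul_lt_nsmul_left (M := Γᵒᵈ) (a := OrderDual.toDual g) hx hmn

variable [NoZeroDivisors R]

theorem leadingCoeff_pow (x : R⟦Γ⟧) (n : ℕ) : (x ^ n).leadingCoeff = x.leadingCoeff ^ n := by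
  induction n with
  | zero => simp
  | succ n ih => rw [pow_succ, leadingCoeff_mul, ih, pow_succ]

theorem orderTop_C_mul {r : R} (hr : r ≠ 0) (x : R⟦Γ⟧) : (C r * x).orderTop = x.orderTop := by
  rw [orderTop_mul, orderTop_C hr, zero_add]

theorem leadingCoeff_C_mul (r : R) (x : R⟦Γ⟧) : (C r * x).leadingCoeff = r * x.leadingCoeff := by
  rw [leadingCoeff_mul, C_apply, leadingCoeff_of_single]

variable [Nontrivial R]

theorem orderTop_pow (x : R⟦Γ⟧) (n : ℕ) : (x ^ n).orderTop = n • x.orderTop := by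
  induction n with
  | zero => simp
  | succ n ih => rw [pow_succ, orderTop_mul, ih, succ_nsmul]

variable {x : R⟦Γ⟧}

theorem orderTop_eval₂_C (hx : x.orderTop < 0) {p : R[X]} (hp : p ≠ 0) :
    (p.eval₂ C x).orderTop = p.natDegree • x.orderTop := by
  induction hn : p.natDegree using Nat.strong_induction_on generalizing p with
  | _ n ih =>
  have hlead : (C p.leadingCoeff * x ^ p.natDegree).orderTop = n • x.orderTop := by
    rw [orderTop_C_mul (Polynomial.leadingCoeff_ne_zero.mpr hp), orderTop_pow, hn]
  rw [Polynomial.eval₂_eq_eval₂_eraseLead_add]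
  by_cases he : p.eraseLead = 0
  · rw [he, Polynomial.eval₂_zero, zero_add, hlead]
  have hlt : p.eraseLead.natDegree < n :=
    hn ▸ p.eraseLead_natDegree_lt_or_eraseLead_eq_zero.resolve_right he
  have hdom : (C p.leadingCoeff * x ^ p.natDegree).orderTop < (p.eraseLead.eval₂ C x).orderTop := by
    rw [hlead, ih _ hlt he rfl]
    exact strictAnti_nsmul_orderTop hx hlt
  rw [orderTop_add_eq_right hdom, hlead]

theorem leadingCoeff_eval₂_C (hx : x.orderTop < 0) (p : R[X]) :
    (p.eval₂ C x).leadingCoeff = p.leadingCoeff * x.leadingCoeff ^ p.natDegree := by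
  by_cases hp : p = 0
  · simp [hp]
  rw [Polynomial.eval₂_eq_eval₂_eraseLead_add]
  by_cases he : p.eraseLead = 0
  · rw [he, Polynomial.eval₂_zero, zero_add, leadingCoeff_C_mul, leadingCoeff_pow]
  have hdom : (C p.leadingCoeff * x ^ p.natDegree).orderTop < (p.eraseLead.eval₂ C x).orderTop := by
    rw [orderTop_C_mul (Polynomial.leadingCoeff_ne_zero.mpr hp), orderTop_pow,
      orderTop_eval₂_C hx he]
    exact strictAnti_nsmul_orderTop hx
      (p.eraseLead_natDegree_lt_or_eraseLead_eq_zero.resolve_right he)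
  rw [leadingCoeff_add_eq_right hdom, leadingCoeff_C_mul, leadingCoeff_pow]

end HahnSeries

theorem LaurentSeries.aeval_eq_eval₂_C_map {R K : Type*} [CommSemiring R] [CommSemiring K]
    [Algebra R K] (x : LaurentSeries K) (p : R[X]) :
    Polynomial.aeval x p = (p.map (algebraMap R K)).eval₂ HahnSeries.C x := by
  rw [Polynomial.aeval_def, Polynomial.eval₂_map]
  congr 1
  ext r
  rw [RingHom.comp_apply, algebraMap_apply', PowerSeries.algebraMap_apply, ofPowerSeries_C]

theorem orderTop_tPow (i : ℤ) : (tPow i).orderTop = ↑(-i) := orderTop_single one_ne_zero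

theorem leadingCoeff_tPow (i : ℤ) : (tPow i).leadingCoeff = 1 := leadingCoeff_of_single

theorem orderTop_tPow_one_lt : (tPow 1).orderTop < (tPow (-1)).orderTop := by
  rw [orderTop_tPow, orderTop_tPow]
  exact WithTop.coe_lt_coe.mpr (by norm_num)

theorem tPow_mul_tPow (i j : ℤ) : tPow i * tPow j = tPow (i + j) := by
  rw [tPow, tPow, tPow, single_mul_single, mul_one, neg_add]

theorem tPow_zero : tPow 0 = 1 := by rw [tPow, neg_zero, single_zero_one]

def twistorU : LaurentSeries ℂ := (tPow 1 - tPow (-1)) / 2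

def twistorV : LaurentSeries ℂ :=
  (tPow 1 + tPow (-1)) / (2 * algebraMap ℂ (LaurentSeries ℂ) Complex.I)

theorem twistorU_eq : twistorU = HahnSeries.C 2⁻¹ * (tPow 1 - tPow (-1)) := by
  rw [twistorU, ← map_ofNat HahnSeries.C 2, div_eq_inv_mul, map_inv₀]

theorem twistorV_eq : twistorV = HahnSeries.C (2 * Complex.I)⁻¹ * (tPow 1 + tPow (-1)) := by
  rw [twistorV, LaurentSeries.algebraMap_apply, ← map_ofNat HahnSeries.C 2, ← map_mul,
    div_eq_inv_mul, map_inv₀]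

theorem twistorU_sq_add_twistorV_sq_add_one : twistorU ^ 2 + twistorV ^ 2 + 1 = 0 := by
  have hts : tPow 1 * tPow (-1) = 1 := by rw [tPow_mul_tPow, add_neg_cancel, tPow_zero]
  have hI : HahnSeries.C Complex.I ^ 2 = (-1 : LaurentSeries ℂ) := by
    rw [← map_pow, Complex.I_sq, map_neg, map_one]
  have h2 : (2 : LaurentSeries ℂ) ≠ 0 := by
    rw [← map_ofNat HahnSeries.C 2]
    exact C_ne_zero two_ne_zero
  have hI0 : HahnSeries.C Complex.I ≠ (0 : LaurentSeries ℂ) := C_ne_zero Complex.I_ne_zero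
  rw [twistorU_eq, twistorV_eq, map_inv₀, map_inv₀, map_mul, map_ofNat]
  field_simp
  linear_combination ((tPow 1 - tPow (-1)) ^ 2 + 4) * hI + 4 * hts

theorem orderTop_twistorU : twistorU.orderTop = ↑(-1 : ℤ) := by
  rw [twistorU_eq, orderTop_C_mul (inv_ne_zero two_ne_zero), orderTop_sub orderTop_tPow_one_lt,
    orderTop_tPow]

theorem leadingCoeff_twistorU : twistorU.leadingCoeff = 2⁻¹ := by
  rw [twistorU_eq, leadingCoeff_C_mul, leadingCoeff_sub orderTop_tPow_one_lt, leadingCoeff_tPow,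
    mul_one]

theorem orderTop_twistorV : twistorV.orderTop = ↑(-1 : ℤ) := by
  rw [twistorV_eq, orderTop_C_mul (by simp), orderTop_add_eq_left orderTop_tPow_one_lt,
    orderTop_tPow]

theorem leadingCoeff_twistorV : twistorV.leadingCoeff = (2 * Complex.I)⁻¹ := by
  rw [twistorV_eq, leadingCoeff_C_mul, leadingCoeff_add_eq_left orderTop_tPow_one_lt,
    leadingCoeff_tPow, mul_one]

theorem twistorU_ne_zero : twistorU ≠ 0 := by
  rw [← orderTop_ne_top, orderTop_twistorU]
  exact WithTop.coe_ne_top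

theorem orderTop_twistorV_neg : twistorV.orderTop < 0 := by
  rw [orderTop_twistorV]
  exact WithTop.coe_lt_coe.mpr (by norm_num)

theorem orderTop_aeval_twistorV {p : ℝ[X]} (hp : p ≠ 0) :
    (Polynomial.aeval twistorV p).orderTop = ↑(-(p.natDegree : ℤ)) := by
  rw [LaurentSeries.aeval_eq_eval₂_C_map,
    orderTop_eval₂_C orderTop_twistorV_neg (Polynomial.map_ne_zero hp), Polynomial.natDegree_map,
    orderTop_twistorV, ← WithTop.coe_nsmul, smul_neg, nsmul_one]

theorem leadingCoeff_aeval_twistorV (p : ℝ[X]) :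
    (Polynomial.aeval twistorV p).leadingCoeff =
      p.leadingCoeff * (2 * Complex.I)⁻¹ ^ p.natDegree := by
  rw [LaurentSeries.aeval_eq_eval₂_C_map, leadingCoeff_eval₂_C orderTop_twistorV_neg,
    Polynomial.natDegree_map, Polynomial.leadingCoeff_map, leadingCoeff_twistorV]
  rfl

theorem aeval_twistorV_ne_zero {p : ℝ[X]} (hp : p ≠ 0) : Polynomial.aeval twistorV p ≠ 0 := by
  rw [← orderTop_ne_top, orderTop_aeval_twistorV hp]
  exact WithTop.coe_ne_top

theorem eq_zero_of_aeval_twistorV_add_twistorU_mul_eq_zero {p q : ℝ[X]}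
    (h : Polynomial.aeval twistorV p + twistorU * Polynomial.aeval twistorV q = 0) :
    p = 0 ∧ q = 0 := by
  suffices hq : q = 0 by
    rw [hq, map_zero, mul_zero, add_zero] at h
    refine ⟨?_, hq⟩
    by_contra hp
    exact aeval_twistorV_ne_zero hp h
  by_contra hq
  have hp : p ≠ 0 := by
    rintro rfl
    rw [map_zero, zero_add] at h
    exact mul_ne_zero twistorU_ne_zero (aeval_twistorV_ne_zero hq) h
  have h' := eq_neg_of_add_eq_zero_left h
  have hdeg : p.natDegree = q.natDegree + 1 := by
    have := congrArg orderTop h'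
    rw [orderTop_neg, orderTop_mul, orderTop_twistorU, orderTop_aeval_twistorV hp,
      orderTop_aeval_twistorV hq, ← WithTop.coe_add, WithTop.coe_inj] at this
    omega
  have hlc := congrArg leadingCoeff h'
  rw [leadingCoeff_neg, leadingCoeff_mul, leadingCoeff_twistorU, leadingCoeff_aeval_twistorV,
    leadingCoeff_aeval_twistorV, hdeg, pow_succ] at hlc
  have hlc' : ((p.leadingCoeff : ℂ) * (2 * Complex.I)⁻¹ + 2⁻¹ * q.leadingCoeff) *
      (2 * Complex.I)⁻¹ ^ q.natDegree = 0 := by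
    linear_combination hlc
  have hI : (p.leadingCoeff : ℂ) = -(q.leadingCoeff * Complex.I) := by
    have := (mul_eq_zero.mp hlc').resolve_right (pow_ne_zero _ (by simp))
    field_simp at this
    linear_combination this
  apply hp
  simpa using congrArg Complex.re hI

theorem ker_eval₂RingHom_twistor :
    RingHom.ker (Polynomial.eval₂RingHom (Polynomial.aeval twistorV).toRingHom twistorU) =
      Ideal.span {(Polynomial.X ^ 2 + Polynomial.C (Polynomial.X ^ 2 + 1) : ℝ[X][X])} := by
  have hdeg : (Polynomial.C (Polynomial.X ^ 2 + 1) : ℝ[X][X]).degree < 2 :=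
    Polynomial.degree_C_le.trans_lt (by norm_num)
  refine Polynomial.ker_eq_span_singleton_of_monic _ (Polynomial.monic_X_pow_add hdeg) ?_ ?_
  · rw [Polynomial.coe_eval₂RingHom, Polynomial.eval₂_add, Polynomial.eval₂_X_pow,
      Polynomial.eval₂_C]
    simpa [add_assoc] using twistorU_sq_add_twistorV_sq_add_one
  · intro r hr hr0
    rw [Polynomial.degree_X_pow_add_C two_pos] at hr
    have hlin := Polynomial.eq_X_add_C_of_degree_le_one (Order.le_of_lt_succ hr)
    rw [hlin] at hr0 ⊢
    simp only [Polynomial.coe_eval₂RingHom, Polynomial.eval₂_add, Polynomial.eval₂_mul,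
      Polynomial.eval₂_C, Polynomial.eval₂_X, AlgHom.toRingHom_eq_coe, RingHom.coe_coe] at hr0
    obtain ⟨h0, h1⟩ := eq_zero_of_aeval_twistorV_add_twistorU_mul_eq_zero
      (p := r.coeff 0) (q := r.coeff 1) (by linear_combination hr0)
    rw [h0, h1, map_zero, zero_mul, zero_add]

theorem aeval_twistor_eq_eval₂_bivariateEquiv (g : MvPolynomial (Fin 2) ℝ) :
    MvPolynomial.aeval ![twistorU, twistorV] g =
      (bivariateEquiv ℝ g).eval₂ (Polynomial.aeval twistorV).toRingHom twistorU := by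
  induction g using MvPolynomial.induction_on with
  | C r =>
    rw [← MvPolynomial.algebraMap_eq, AlgHom.commutes, AlgEquiv.commutes,
      Polynomial.algebraMap_apply, Polynomial.eval₂_C, AlgHom.toRingHom_eq_coe, RingHom.coe_coe,
      AlgHom.commutes]
  | add f g hf hg => simp [hf, hg]
  | mul_X f i hf => fin_cases i <;> simp [hf]

theorem ker_aeval_twistor :
    RingHom.ker (MvPolynomial.aeval ![twistorU, twistorV]) =
      Ideal.span {(X 0 : MvPolynomial (Fin 2) ℝ) ^ 2 + X 1 ^ 2 + 1} := by
  ext g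
  rw [RingHom.mem_ker, aeval_twistor_eq_eval₂_bivariateEquiv, ← Polynomial.coe_eval₂RingHom,
    ← RingHom.mem_ker, ker_eval₂RingHom_twistor, Ideal.mem_span_singleton,
    Ideal.mem_span_singleton, ← map_dvd_iff (bivariateEquiv ℝ)]
  simp [add_assoc]

/-- there is a well-defined injective `ℝ`-algebra homomorphism
`ℝ[u,v]/(u² + v² + 1) → ℂ((t⁻¹))` determined by `u ↦ (t − t⁻¹)/2` and
`v ↦ (t + t⁻¹)/(2i)`. -/
theorem stmt5 :
    ∃ φ : TwistorRing →ₐ[ℝ] LaurentSeries ℂ,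
      Function.Injective φ ∧
      φ (Ideal.Quotient.mk _ (X 0)) = (tPow 1 - tPow (-1)) / 2 ∧
      φ (Ideal.Quotient.mk _ (X 1)) =
        (tPow 1 + tPow (-1)) / (2 * algebraMap ℂ (LaurentSeries ℂ) Complex.I) := by
  refine ⟨Ideal.Quotient.liftₐ _ (MvPolynomial.aeval ![twistorU, twistorV])
    fun a ha => RingHom.mem_ker.mp (ker_aeval_twistor ▸ ha), ?_, ?_, ?_⟩
  · exact RingHom.lift_injective_of_ker_le_ideal _ _ ker_aeval_twistor.le
  · exact MvPolynomial.aeval_X ![twistorU, twistorV] 0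
  · exact MvPolynomial.aeval_X ![twistorU, twistorV] 1

end
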